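/- arXiv:2404.03524 — 2 statements merged into one kernel-verified Lean document; each statement's English description precedes it below -/
import Mathlib

section
/- Let N ≥ 2 be an integer, K a positive integer, c ∈ [0,1], d ∈ {0,1,...,N-1}, and X = (X_1,...,X_N) a point in the standard (N-1)-simplex (X_i ≥ 0, ∑X_i = 1). Let S_i be independent binomial random variables with parameters c(1-X_i)K and d/(N-1), and define Y_i = (X_i K + S_i)/(K + dcK). Then ∑_{i=1}^N E[(Y_i - 1/N)²] = dc(N-1-d)/((1+dc)²(N-1)K) + ((N-1-dc)²/((1+dc)²(N-1)²)) · ∑_{i=1}^N (X_i - 1/N)². -/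
/-- Expectation of `f` applied to a `Binomial(n, q)` random variable. -/
noncomputable def binomExp (n : ℕ) (q : ℝ) (f : ℕ → ℝ) : ℝ :=
  ∑ k ∈ Finset.range (n + 1), (n.choose k : ℝ) * q ^ k * (1 - q) ^ (n - k) * f k

lemma bexp_one (n : ℕ) (q : ℝ) : binomExp n q (fun _ => 1) = 1 := by
  have h := add_pow q (1 - q) n
  simp only [add_sub_cancel, one_pow] at h
  unfold binomExp
  simp only [mul_one]
  rw [show ∑ k ∈ Finset.range (n+1), (n.choose k : ℝ) * q ^ k * (1 - q) ^ (n - k)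
      = ∑ k ∈ Finset.range (n+1), q ^ k * (1 - q) ^ (n - k) * (n.choose k : ℝ) from
    Finset.sum_congr rfl fun k _ => by ring, ← h]

lemma bexp_succ_mul (n : ℕ) (q : ℝ) (g : ℕ → ℝ) :
    binomExp (n+1) q (fun k => (k:ℝ) * g k) = (n+1) * q * binomExp n q (fun k => g (k+1)) := by
  unfold binomExp
  rw [Finset.sum_range_succ']
  simp only [Nat.cast_zero, zero_mul, mul_zero, add_zero]
  rw [Finset.mul_sum]
  refine Finset.sum_congr rfl fun k hk => ?_
  have hc : ((n+1) * n.choose k : ℝ) = ((n+1).choose (k+1) : ℝ) * (k+1) := by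
    exact_mod_cast congrArg Nat.cast (Nat.add_one_mul_choose_eq n k)
  have hsub : n + 1 - (k + 1) = n - k := by omega
  rw [hsub]
  push_cast
  linear_combination (-(q^(k+1) * (1-q)^(n-k) * g (k+1))) * hc

lemma bexp_id (n : ℕ) (q : ℝ) : binomExp n q (fun k => (k:ℝ)) = n * q := by
  cases n with
  | zero => simp [binomExp]
  | succ m =>
      have h := bexp_succ_mul m q (fun _ => 1)
      simp only [mul_one] at h
      rw [h, bexp_one]
      push_cast; ring

lemma bexp_fac2 (n : ℕ) (q : ℝ) :
    binomExp n q (fun k => (k:ℝ) * ((k:ℝ) - 1)) = (n:ℝ) * ((n:ℝ) - 1) * q^2 := by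
  cases n with
  | zero => simp [binomExp]
  | succ m =>
      have h := bexp_succ_mul m q (fun k => (k:ℝ) - 1)
      have h2 : binomExp m q (fun k => ((k+1:ℕ):ℝ) - 1) = m * q := by
        rw [show (fun k : ℕ => ((k+1:ℕ):ℝ) - 1) = (fun k : ℕ => (k:ℝ)) from
          funext fun k => by push_cast; ring]
        exact bexp_id m q
      rw [h, h2]
      push_cast; ring

lemma bexp_quad (n : ℕ) (q A B : ℝ) :
    binomExp n q (fun k => (A + B * k) ^ 2)
      = (A + B * (n * q)) ^ 2 + B ^ 2 * (n * q) * (1 - q) := by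
  have h1 := bexp_one n q
  have h2 := bexp_id n q
  have h3 := bexp_fac2 n q
  unfold binomExp at h1 h2 h3 ⊢
  have expand : ∀ k ∈ Finset.range (n+1),
      (n.choose k : ℝ) * q ^ k * (1 - q) ^ (n - k) * (A + B * k) ^ 2
      = A^2 * ((n.choose k : ℝ) * q ^ k * (1 - q) ^ (n - k) * 1)
        + (2*A*B + B^2) * ((n.choose k : ℝ) * q ^ k * (1 - q) ^ (n - k) * (k:ℝ))
        + B^2 * ((n.choose k : ℝ) * q ^ k * (1 - q) ^ (n - k) * ((k:ℝ) * ((k:ℝ) - 1))) :=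
    fun k _ => by ring
  beta_reduce at h1 h2 h3
  rw [Finset.sum_congr rfl expand]
  simp only [Finset.sum_add_distrib]
  rw [← Finset.mul_sum, ← Finset.mul_sum, ← Finset.mul_sum, h1, h2, h3]
  ring

theorem stmt_1 (N K : ℕ) (hN : 2 ≤ N) (hK : 1 ≤ K) (c : ℝ) (hc0 : 0 ≤ c) (hc1 : c ≤ 1)
    (d : ℕ) (hd : d ≤ N - 1) (X : Fin N → ℝ) (hX0 : ∀ i, 0 ≤ X i) (hX1 : ∑ i, X i = 1)
    (n : Fin N → ℕ) (hn : ∀ i, (n i : ℝ) = c * (1 - X i) * K) :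
    ∑ i, binomExp (n i) ((d : ℝ) / (N - 1))
        (fun s => ((X i * K + s) / (K + d * c * K) - 1 / N) ^ 2)
      = d * c * (N - 1 - d) / ((1 + d * c) ^ 2 * (N - 1) * K)
        + (N - 1 - d * c) ^ 2 / ((1 + d * c) ^ 2 * (N - 1) ^ 2)
          * ∑ i, (X i - 1 / N) ^ 2 := by
  have hK2 : (1:ℝ) ≤ (K:ℝ) := by exact_mod_cast hK
  have hKR : (K:ℝ) ≠ 0 := by linarith
  have hN2 : (2:ℝ) ≤ (N:ℝ) := by exact_mod_cast hN
  have hN1 : (N:ℝ) - 1 ≠ 0 := by linarith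
  have hN0 : (N:ℝ) ≠ 0 := by linarith
  have hdc0 : 0 ≤ (d:ℝ) * c := mul_nonneg (Nat.cast_nonneg d) hc0
  have hdc : (1:ℝ) + (d:ℝ) * c ≠ 0 := by linarith
  have key : ∀ i, binomExp (n i) ((d : ℝ) / (N - 1))
      (fun s => ((X i * K + s) / (K + d * c * K) - 1 / N) ^ 2)
      = ((N:ℝ) - 1 - d * c) ^ 2 / ((1 + d * c) ^ 2 * ((N:ℝ) - 1) ^ 2) * (X i - 1 / N) ^ 2
        + (d * c * ((N:ℝ) - 1 - d) / ((1 + d * c) ^ 2 * ((N:ℝ) - 1) ^ 2 * K)) * (1 - X i) := by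
    intro i
    have hf : (fun s : ℕ => ((X i * K + s) / ((K:ℝ) + d * c * K) - 1 / N) ^ 2)
        = fun s : ℕ => ((X i * K / ((K:ℝ) + d * c * K) - 1 / N)
            + (1 / ((K:ℝ) + d * c * K)) * s) ^ 2 := by
      funext s; ring
    rw [hf, bexp_quad, hn i]
    field_simp
    ring
  rw [Finset.sum_congr rfl fun i _ => key i, Finset.sum_add_distrib,
    ← Finset.mul_sum, ← Finset.mul_sum]
  have hsum : ∑ i : Fin N, (1 - X i) = (N:ℝ) - 1 := by
    rw [Finset.sum_sub_distrib, hX1]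
    simp
  rw [hsum]
  field_simp
  ring
end

section
/- Let p ∈ [0,1), integer d ≥ 1, and let a, b, a', b' be real numbers with a ≥ max{0, b} and a' ≥ max{0, b'}. Let λ_1, λ_2, λ_3, λ_4 be reals with λ_1 = (1+d(1-p))/((1-p)(d+1)), 1 ≤ λ_2 ≤ λ_1, 1 ≤ λ_3 ≤ λ_1, 1 ≤ λ_4 ≤ λ_3. Then (1/(1-p) - λ_1)·a - (λ_2 - 1)·b + (1/(1-p) - λ_3)·a' - (λ_4 - 1)·b' ≥ (p/(1-p))·((d-1)/(d+1))·(a + a'). -/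
theorem stmt_8 (p : ℝ) (hp0 : 0 ≤ p) (hp1 : p < 1) (d : ℕ) (hd : 1 ≤ d)
    (a b a' b' : ℝ) (ha : a ≥ max 0 b) (ha' : a' ≥ max 0 b')
    (l₁ l₂ l₃ l₄ : ℝ)
    (hl₁ : l₁ = (1 + d * (1 - p)) / ((1 - p) * (d + 1)))
    (hl₂ : 1 ≤ l₂ ∧ l₂ ≤ l₁) (hl₃ : 1 ≤ l₃ ∧ l₃ ≤ l₁) (hl₄ : 1 ≤ l₄ ∧ l₄ ≤ l₃) :
    (1 / (1 - p) - l₁) * a - (l₂ - 1) * b + (1 / (1 - p) - l₃) * a' - (l₄ - 1) * b'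
      ≥ (p / (1 - p)) * ((d - 1) / (d + 1)) * (a + a') := by
  obtain ⟨h2a, h2b⟩ := hl₂
  obtain ⟨h3a, h3b⟩ := hl₃
  obtain ⟨h4a, h4b⟩ := hl₄
  have hq : (0:ℝ) < 1 - p := by linarith
  have hD : (1:ℝ) ≤ (d:ℝ) := by exact_mod_cast hd
  have hd1 : (0:ℝ) < (d:ℝ) + 1 := by linarith
  have ha0 : 0 ≤ a := le_trans (le_max_left 0 b) ha
  have hba : b ≤ a := le_trans (le_max_right 0 b) ha
  have ha0' : 0 ≤ a' := le_trans (le_max_left 0 b') ha'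
  have hba' : b' ≤ a' := le_trans (le_max_right 0 b') ha'
  have hQ : (0:ℝ) < (1 - p) * ((d:ℝ) + 1) := mul_pos hq hd1
  have hl1 : l₁ - 1 = p / ((1 - p) * ((d:ℝ) + 1)) := by
    rw [hl₁]; field_simp; ring
  have hinv : 1 / (1 - p) - l₁ = (d:ℝ) * p / ((1 - p) * ((d:ℝ) + 1)) := by
    rw [hl₁]; field_simp; ring
  have hrhs : (p / (1 - p)) * (((d:ℝ) - 1) / ((d:ℝ) + 1))
      = p * ((d:ℝ) - 1) / ((1 - p) * ((d:ℝ) + 1)) := by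
    field_simp
  have hb1 : (l₂ - 1) * b ≤ (l₁ - 1) * a := by
    rcases le_or_gt 0 b with hb | hb
    · exact mul_le_mul (by linarith) hba hb (by linarith)
    · have h1 : (l₂ - 1) * b ≤ 0 := mul_nonpos_of_nonneg_of_nonpos (by linarith) hb.le
      have h2 : 0 ≤ (l₁ - 1) * a := mul_nonneg (by linarith) ha0
      linarith
  have hb2 : (l₄ - 1) * b' ≤ (l₁ - 1) * a' := by
    rcases le_or_gt 0 b' with hb | hb
    · exact mul_le_mul (by linarith) hba' hb (by linarith)
    · have h1 : (l₄ - 1) * b' ≤ 0 := mul_nonpos_of_nonneg_of_nonpos (by linarith) hb.le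
      have h2 : 0 ≤ (l₁ - 1) * a' := mul_nonneg (by linarith) ha0'
      linarith
  have hb3 : (1 / (1 - p) - l₁) * a' ≤ (1 / (1 - p) - l₃) * a' :=
    mul_le_mul_of_nonneg_right (by linarith) ha0'
  rw [hrhs, hl1] at *
  rw [hinv]
  rw [hinv] at hb3
  have key : (d:ℝ) * p / ((1 - p) * ((d:ℝ) + 1)) * a - p / ((1 - p) * ((d:ℝ) + 1)) * a
      + (d:ℝ) * p / ((1 - p) * ((d:ℝ) + 1)) * a' - p / ((1 - p) * ((d:ℝ) + 1)) * a'
      = p * ((d:ℝ) - 1) / ((1 - p) * ((d:ℝ) + 1)) * (a + a') := by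
    field_simp; ring
  linarith
end
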